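/- The density ρ₁ = -(1/2)u_xx²/u_x² - (1/3)P(u)/u_x² is a conserved density for the Krichever–Novikov equation: there exists a differential function σ₁ of x, u, u_x, ..., u_4x such that D_t(ρ₁) = D_x(σ₁) on solutions of the KN equation. -/

import Mathlib

noncomputable section

open Real

/-- Total `x`-derivative (on solutions: partial derivative in `x`). -/
def Dx (f : ℝ → ℝ → ℝ) : ℝ → ℝ → ℝ := fun x t => deriv (fun y => f y t) x

/-- Total `t`-derivative (on solutions: partial derivative in `t`). -/
def Dt (f : ℝ → ℝ → ℝ) : ℝ → ℝ → ℝ := fun x t => deriv (fun s => f x s) t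

/-- The cubic polynomial `P(u) = u³ + c₁ u + c₀`. -/
def Pcub (c₀ c₁ v : ℝ) : ℝ := v ^ 3 + c₁ * v + c₀

/-- `P′(u) = 3u² + c₁`. -/
def Pder (c₁ v : ℝ) : ℝ := 3 * v ^ 2 + c₁

/-- Right-hand side of the Krichever–Novikov equation. -/
def G1 (c₀ c₁ : ℝ) (u : ℝ → ℝ → ℝ) : ℝ → ℝ → ℝ := fun x t =>
  Dx (Dx (Dx u)) x t - (3 / 2) * (Dx (Dx u) x t) ^ 2 / Dx u x t
    + Pcub c₀ c₁ (u x t) / Dx u x t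

/-- Fréchet derivative of `G₁` applied to `G`:
`(G₁)⋆(G) = Σ_k (∂G₁/∂u_{kx}) Dₓᵏ(G)` with the explicit partial derivatives
`∂G₁/∂u = P′/u_x`, `∂G₁/∂u_x = (3/2)u_xx²/u_x² - P/u_x²`,
`∂G₁/∂u_xx = -3u_xx/u_x`, `∂G₁/∂u_xxx = 1`. -/
def FrG1 (c₀ c₁ : ℝ) (u G : ℝ → ℝ → ℝ) : ℝ → ℝ → ℝ := fun x t =>
  (Pder c₁ (u x t) / Dx u x t) * G x t
    + ((3 / 2) * (Dx (Dx u) x t) ^ 2 / (Dx u x t) ^ 2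
        - Pcub c₀ c₁ (u x t) / (Dx u x t) ^ 2) * Dx G x t
    + (-(3 * Dx (Dx u) x t) / Dx u x t) * Dx (Dx G) x t
    + Dx (Dx (Dx G)) x t

/-- The conserved density `ρ₁ = -(1/2)u_xx²/u_x² - (1/3)P(u)/u_x²`. -/
def rho1 (c₀ c₁ : ℝ) (u : ℝ → ℝ → ℝ) : ℝ → ℝ → ℝ := fun x t =>
  -(1 / 2) * (Dx (Dx u) x t) ^ 2 / (Dx u x t) ^ 2
    - (1 / 3) * Pcub c₀ c₁ (u x t) / (Dx u x t) ^ 2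

namespace KNaux

/-- directional partial derivative -/
def pdv (v : ℝ × ℝ) (F : ℝ × ℝ → ℝ) : ℝ × ℝ → ℝ := fun p => fderiv ℝ F p v

lemma contDiff_pdv (v : ℝ × ℝ) {F : ℝ × ℝ → ℝ} (hF : ContDiff ℝ (⊤ : ℕ∞) F) :
    ContDiff ℝ (⊤ : ℕ∞) (pdv v F) :=
  (hF.fderiv_right (by simp)).clm_apply contDiff_const

lemma hasDerivAt_slice1 {F : ℝ × ℝ → ℝ} (hF : ContDiff ℝ (⊤ : ℕ∞) F) (x t : ℝ) :
    HasDerivAt (fun y => F (y, t)) (pdv (1, 0) F (x, t)) x := by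
  have h : HasDerivAt (fun y : ℝ => (y, t)) ((1 : ℝ), (0 : ℝ)) x :=
    (hasDerivAt_id x).prodMk (hasDerivAt_const x t)
  exact ((hF.differentiable (by simp) (x, t)).hasFDerivAt).comp_hasDerivAt x h

lemma hasDerivAt_slice2 {F : ℝ × ℝ → ℝ} (hF : ContDiff ℝ (⊤ : ℕ∞) F) (x t : ℝ) :
    HasDerivAt (fun s => F (x, s)) (pdv (0, 1) F (x, t)) t := by
  have h : HasDerivAt (fun s : ℝ => (x, s)) ((0 : ℝ), (1 : ℝ)) t :=
    (hasDerivAt_const t x).prodMk (hasDerivAt_id t)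
  exact ((hF.differentiable (by simp) (x, t)).hasFDerivAt).comp_hasDerivAt t h

lemma pd_swap {F : ℝ × ℝ → ℝ} (hF : ContDiff ℝ (⊤ : ℕ∞) F) (p : ℝ × ℝ) :
    pdv (0, 1) (pdv (1, 0) F) p = pdv (1, 0) (pdv (0, 1) F) p := by
  have hd : DifferentiableAt ℝ (fderiv ℝ F) p :=
    ((hF.fderiv_right (m := (⊤ : ℕ∞)) (by simp)).differentiable (by simp)) p
  have key : ∀ v w : ℝ × ℝ, fderiv ℝ (fun q => fderiv ℝ F q v) p w
      = fderiv ℝ (fderiv ℝ F) p w v := by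
    intro v w
    rw [fderiv_clm_apply hd (differentiableAt_const v)]
    simp
  have sym := second_derivative_symmetric
      (fun y => (hF.differentiable (by simp) y).hasFDerivAt) hd.hasFDerivAt
  show fderiv ℝ (fun q => fderiv ℝ F q (1, 0)) p (0, 1)
      = fderiv ℝ (fun q => fderiv ℝ F q (0, 1)) p (1, 0)
  rw [key, key, sym]

def jet (F : ℝ × ℝ → ℝ) : ℕ → ℝ × ℝ → ℝ
  | 0 => F
  | k + 1 => pdv (1, 0) (jet F k)

lemma jet_contDiff {F : ℝ × ℝ → ℝ} (hF : ContDiff ℝ (⊤ : ℕ∞) F) : ∀ k, ContDiff ℝ (⊤ : ℕ∞) (jet F k)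
  | 0 => hF
  | k + 1 => contDiff_pdv _ (jet_contDiff hF k)

lemma congr_deriv {f : ℝ → ℝ} {d d' x : ℝ} (h : HasDerivAt f d x) (e : d' = d) :
    HasDerivAt f d' x := e ▸ h

def Gex (c0 c1 a0 a1 a2 a3 : ℝ) : ℝ :=
  a3 - 3 / 2 * a2 ^ 2 / a1 + (a0 ^ 3 + c1 * a0 + c0) / a1

def Rex (c0 c1 a0 a1 a2 : ℝ) : ℝ :=
  -(1 / 2) * a2 ^ 2 / a1 ^ 2 - 1 / 3 * (a0 ^ 3 + c1 * a0 + c0) / a1 ^ 2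

def DRex (c0 c1 a0 a1 a2 b0 b1 b2 : ℝ) : ℝ :=
  -a2 * b2 / a1 ^ 2 + (a2 ^ 2 + 2 / 3 * (a0 ^ 3 + c1 * a0 + c0)) * b1 / a1 ^ 3
    - 1 / 3 * (3 * a0 ^ 2 + c1) * b0 / a1 ^ 2

def DGex (c0 c1 a0 a1 a2 a3 a4 : ℝ) : ℝ :=
  ((3/2) * a2 ^ 3 + (-3) * a1 * a2 * a3 + (1) * a1 ^ 2 * a4 + (3) * a0 ^ 2 * a1 ^ 2 + (-1) * a0 ^ 3 * a2 + (1) * c1 * a1 ^ 2 + (-1) * c1 * a0 * a2 + (-1) * c0 * a2) / a1 ^ 2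

def DDGexR (c0 c1 a0 a1 a2 a3 a4 a5 : ℝ) : ℝ :=
  ((-3) * a2 ^ 4 + (15/2) * a1 * a2 ^ 2 * a3 + (-3) * a1 ^ 2 * a3 ^ 2 + (-3) * a1 ^ 2 * a2 * a4 + (1) * a1 ^ 3 * a5 + (6) * a0 * a1 ^ 4 + (-3) * a0 ^ 2 * a1 ^ 2 * a2 + (2) * a0 ^ 3 * a2 ^ 2 + (-1) * a0 ^ 3 * a1 * a3 + (-1) * c1 * a1 ^ 2 * a2 + (2) * c1 * a0 * a2 ^ 2 + (-1) * c1 * a0 * a1 * a3 + (2) * c0 * a2 ^ 2 + (-1) * c0 * a1 * a3) / a1 ^ 3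

def Sex (c0 c1 a0 a1 a2 a3 a4 : ℝ) : ℝ :=
  ((-9/8) * a2 ^ 4 + (2) * a1 * a2 ^ 2 * a3 + (1/2) * a1 ^ 2 * a3 ^ 2 + (-1) * a1 ^ 2 * a2 * a4 + (-3) * a0 ^ 2 * a1 ^ 2 * a2 + (1/2) * a0 ^ 3 * a2 ^ 2 + (2/3) * a0 ^ 3 * a1 * a3 + (1/6) * a0 ^ 6 + (-1) * c1 * a1 ^ 2 * a2 + (1/2) * c1 * a0 * a2 ^ 2 + (2/3) * c1 * a0 * a1 * a3 + (1/3) * c1 * a0 ^ 4 + (1/6) * c1 ^ 2 * a0 ^ 2 + (1/2) * c0 * a2 ^ 2 + (2/3) * c0 * a1 * a3 + (1/3) * c0 * a0 ^ 3 + (1/3) * c0 * c1 * a0 + (1/6) * c0 ^ 2) / a1 ^ 4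

def DSex (c0 c1 a0 a1 a2 a3 a4 a5 : ℝ) : ℝ :=
  ((9/2) * a2 ^ 5 + (-21/2) * a1 * a2 ^ 3 * a3 + (3) * a1 ^ 2 * a2 * a3 ^ 2 + (4) * a1 ^ 2 * a2 ^ 2 * a4 + (-1) * a1 ^ 3 * a2 * a5 + (-6) * a0 * a1 ^ 4 * a2 + (15/2) * a0 ^ 2 * a1 ^ 2 * a2 ^ 2 + (-1) * a0 ^ 2 * a1 ^ 3 * a3 + (-2) * a0 ^ 3 * a2 ^ 3 + (-1) * a0 ^ 3 * a1 * a2 * a3 + (2/3) * a0 ^ 3 * a1 ^ 2 * a4 + (1) * a0 ^ 5 * a1 ^ 2 + (-2/3) * a0 ^ 6 * a2 + (5/2) * c1 * a1 ^ 2 * a2 ^ 2 + (-1/3) * c1 * a1 ^ 3 * a3 + (-2) * c1 * a0 * a2 ^ 3 + (-1) * c1 * a0 * a1 * a2 * a3 + (2/3) * c1 * a0 * a1 ^ 2 * a4 + (4/3) * c1 * a0 ^ 3 * a1 ^ 2 + (-4/3) * c1 * a0 ^ 4 * a2 + (1/3) * c1 ^ 2 * a0 * a1 ^ 2 + (-2/3)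 * c1 ^ 2 * a0 ^ 2 * a2 + (-2) * c0 * a2 ^ 3 + (-1) * c0 * a1 * a2 * a3 + (2/3) * c0 * a1 ^ 2 * a4 + (1) * c0 * a0 ^ 2 * a1 ^ 2 + (-4/3) * c0 * a0 ^ 3 * a2 + (1/3) * c0 * c1 * a1 ^ 2 + (-4/3) * c0 * c1 * a0 * a2 + (-2/3) * c0 ^ 2 * a2) / a1 ^ 5

set_option maxHeartbeats 1000000 in
lemma hasDerivAt_Gex (c0 c1 : ℝ) {v0 v1 v2 v3 v4 : ℝ → ℝ} {x : ℝ}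
    (h0 : HasDerivAt v0 (v1 x) x) (h1 : HasDerivAt v1 (v2 x) x)
    (h2 : HasDerivAt v2 (v3 x) x) (h3 : HasDerivAt v3 (v4 x) x)
    (hne : v1 x ≠ 0) :
    HasDerivAt (fun y => Gex c0 c1 (v0 y) (v1 y) (v2 y) (v3 y))
      (DGex c0 c1 (v0 x) (v1 x) (v2 x) (v3 x) (v4 x)) x := by
  have H := (h3.sub (((h2.pow 2).const_mul (3 / 2 : ℝ)).div h1 hne)).add
      ((((h0.pow 3).add (h0.const_mul c1)).add_const c0).div h1 hne)
  unfold Gex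
  refine congr_deriv H ?_
  unfold DGex
  simp only [Pi.pow_apply, Pi.add_apply, Pi.sub_apply, Pi.mul_apply, Pi.div_apply]
  field_simp
  ring

set_option maxHeartbeats 1000000 in
lemma hasDerivAt_DGex (c0 c1 : ℝ) {v0 v1 v2 v3 v4 v5 : ℝ → ℝ} {x : ℝ}
    (h0 : HasDerivAt v0 (v1 x) x) (h1 : HasDerivAt v1 (v2 x) x)
    (h2 : HasDerivAt v2 (v3 x) x) (h3 : HasDerivAt v3 (v4 x) x)
    (h4 : HasDerivAt v4 (v5 x) x) (hne : v1 x ≠ 0) :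
    HasDerivAt (fun y => DGex c0 c1 (v0 y) (v1 y) (v2 y) (v3 y) (v4 y))
      (DDGexR c0 c1 (v0 x) (v1 x) (v2 x) (v3 x) (v4 x) (v5 x)) x := by
  have H := ((((((((((h2.pow 3).const_mul ((3/2) : ℝ)).add (((h1.const_mul ((-3) : ℝ)).mul h2).mul h3)).add (((h1.pow 2).const_mul ((1) : ℝ)).mul h4)).add (((h0.pow 2).const_mul ((3) : ℝ)).mul (h1.pow 2))).add (((h0.pow 3).const_mul ((-1) : ℝ)).mul h2)).add ((h1.pow 2).const_mul ((1) * c1 : ℝ))).add ((h0.const_mul ((-1) * c1 : ℝ)).mul h2)).add (h2.const_mul ((-1) * c0 : ℝ))).div (h1.pow 2) (pow_ne_zero 2 hne))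
  unfold DGex
  refine congr_deriv H ?_
  unfold DDGexR
  simp only [Pi.pow_apply, Pi.add_apply, Pi.sub_apply, Pi.mul_apply, Pi.div_apply]
  field_simp
  ring

set_option maxHeartbeats 1000000 in
lemma hasDerivAt_Sex (c0 c1 : ℝ) {v0 v1 v2 v3 v4 v5 : ℝ → ℝ} {x : ℝ}
    (h0 : HasDerivAt v0 (v1 x) x) (h1 : HasDerivAt v1 (v2 x) x)
    (h2 : HasDerivAt v2 (v3 x) x) (h3 : HasDerivAt v3 (v4 x) x)
    (h4 : HasDerivAt v4 (v5 x) x) (hne : v1 x ≠ 0) :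
    HasDerivAt (fun y => Sex c0 c1 (v0 y) (v1 y) (v2 y) (v3 y) (v4 y))
      (DSex c0 c1 (v0 x) (v1 x) (v2 x) (v3 x) (v4 x) (v5 x)) x := by
  have H := ((((((((((((((((((((h2.pow 4).const_mul ((-9/8) : ℝ)).add (((h1.const_mul ((2) : ℝ)).mul (h2.pow 2)).mul h3)).add (((h1.pow 2).const_mul ((1/2) : ℝ)).mul (h3.pow 2))).add ((((h1.pow 2).const_mul ((-1) : ℝ)).mul h2).mul h4)).add ((((h0.pow 2).const_mul ((-3) : ℝ)).mul (h1.pow 2)).mul h2)).add (((h0.pow 3).const_mul ((1/2) : ℝ)).mul (h2.pow 2))).add ((((h0.pow 3).const_mul ((2/3) : ℝ)).mul h1).mul h3)).add ((h0.pow 6).const_mul ((1/6) : ℝ))).add (((h1.pow 2).const_mul ((-1) * c1 : ℝ)).mul h2)).add ((h0.const_mul ((1/2) * c1 : ℝ)).mul (h2.pow 2))).add (((h0.const_mul ((2/3) * c1 : ℝ)).mul h1).mul h3)).add ((h0.pow 4).const_mul ((1/3) * c1 : ℝ))).add ((h0.pow 2).const_mul ((1/6) * c1 ^ 2 : ℝ))).add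 ((h2.pow 2).const_mul ((1/2) * c0 : ℝ))).add ((h1.const_mul ((2/3) * c0 : ℝ)).mul h3)).add ((h0.pow 3).const_mul ((1/3) * c0 : ℝ))).add (h0.const_mul ((1/3) * c0 * c1 : ℝ))).add (hasDerivAt_const x ((1/6) * c0 ^ 2 : ℝ))).div (h1.pow 4) (pow_ne_zero 4 hne))
  unfold Sex
  refine congr_deriv H ?_
  unfold DSex
  simp only [Pi.pow_apply, Pi.add_apply, Pi.sub_apply, Pi.mul_apply, Pi.div_apply]
  field_simp
  ring

set_option maxHeartbeats 1000000 in
lemma hasDerivAt_Rex (c0 c1 : ℝ) {v0 v1 v2 : ℝ → ℝ} {b0 b1 b2 : ℝ} {x : ℝ}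
    (h0 : HasDerivAt v0 b0 x) (h1 : HasDerivAt v1 b1 x)
    (h2 : HasDerivAt v2 b2 x) (hne : v1 x ≠ 0) :
    HasDerivAt (fun y => Rex c0 c1 (v0 y) (v1 y) (v2 y))
      (DRex c0 c1 (v0 x) (v1 x) (v2 x) b0 b1 b2) x := by
  have hne2 : v1 x ^ 2 ≠ 0 := pow_ne_zero 2 hne
  have H := ((((h2.pow 2).const_mul (-(1 / 2) : ℝ)).div (h1.pow 2) hne2).sub
      (((((h0.pow 3).add (h0.const_mul c1)).add_const c0).const_mul (1 / 3 : ℝ)).div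
        (h1.pow 2) hne2))
  unfold Rex
  refine congr_deriv H ?_
  unfold DRex
  simp only [Pi.pow_apply, Pi.add_apply, Pi.sub_apply, Pi.mul_apply, Pi.div_apply]
  field_simp
  ring

set_option maxHeartbeats 2000000 in
lemma key_ident (c0 c1 a0 a1 a2 a3 a4 a5 : ℝ) (h : a1 ≠ 0) :
    DRex c0 c1 a0 a1 a2 (Gex c0 c1 a0 a1 a2 a3) (DGex c0 c1 a0 a1 a2 a3 a4)
      (DDGexR c0 c1 a0 a1 a2 a3 a4 a5) = DSex c0 c1 a0 a1 a2 a3 a4 a5 := by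
  unfold DRex Gex DGex DDGexR DSex
  field_simp
  ring

end KNaux

open KNaux

set_option maxHeartbeats 2000000

/-- `ρ₁` is a conserved density for the Krichever–Novikov
equation: there is a differential function `σ₁` of `x, u, u_x, …, u_4x` with
`D_t(ρ₁) = D_x(σ₁)` on solutions. -/
theorem rho1_conserved (c₀ c₁ : ℝ) (u : ℝ → ℝ → ℝ)
    (hu : ContDiff ℝ (⊤ : ℕ∞) (Function.uncurry u))
    (hux : ∀ x t, Dx u x t ≠ 0)
    (hKN : ∀ x t, Dt u x t = G1 c₀ c₁ u x t) :
    ∃ F : ℝ → ℝ → ℝ → ℝ → ℝ → ℝ → ℝ, ∀ x t,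
      Dt (rho1 c₀ c₁ u) x t =
        Dx (fun y s =>
          F y (u y s) (Dx u y s) (Dx (Dx u) y s) (Dx (Dx (Dx u)) y s)
            (Dx (Dx (Dx (Dx u))) y s)) x t := by
  set f : ℝ × ℝ → ℝ := Function.uncurry u with hfdef
  have hjet : ∀ k, ContDiff ℝ (⊤ : ℕ∞) (jet f k) := jet_contDiff hu
  have hDx : ∀ (k : ℕ) (x t : ℝ), Dx (fun a b => jet f k (a, b)) x t
      = jet f (k + 1) (x, t) :=
    fun k x t => (hasDerivAt_slice1 (hjet k) x t).deriv
  have hJ1 : ∀ x t, Dx u x t = jet f 1 (x, t) := hDx 0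
  have hfun1 : Dx u = fun a b => jet f 1 (a, b) :=
    funext fun a => funext fun b => hJ1 a b
  have hJ2 : ∀ x t, Dx (Dx u) x t = jet f 2 (x, t) := by
    rw [hfun1]; exact hDx 1
  have hfun2 : Dx (Dx u) = fun a b => jet f 2 (a, b) :=
    funext fun a => funext fun b => hJ2 a b
  have hJ3 : ∀ x t, Dx (Dx (Dx u)) x t = jet f 3 (x, t) := by
    rw [hfun2]; exact hDx 2
  have hfun3 : Dx (Dx (Dx u)) = fun a b => jet f 3 (a, b) :=
    funext fun a => funext fun b => hJ3 a b
  have hJ4 : ∀ x t, Dx (Dx (Dx (Dx u))) x t = jet f 4 (x, t) := by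
    rw [hfun3]; exact hDx 3
  have hne : ∀ x t, jet f 1 (x, t) ≠ 0 := by
    intro x t
    rw [← hJ1]; exact hux x t
  have hGc : pdv (0, 1) f = fun p => Gex c₀ c₁ (jet f 0 p)
      (jet f 1 p) (jet f 2 p) (jet f 3 p) := by
    funext p
    obtain ⟨x, t⟩ := p
    have h1 : Dt u x t = pdv (0, 1) f (x, t) :=
      (hasDerivAt_slice2 hu x t).deriv
    rw [← h1, hKN]
    simp only [G1, Gex, Pcub, hJ1, hJ2, hJ3]
    rfl
  have hGcsmooth : ContDiff ℝ (⊤ : ℕ∞) (fun p => Gex c₀ c₁ (jet f 0 p)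
      (jet f 1 p) (jet f 2 p) (jet f 3 p)) := hGc ▸ contDiff_pdv (0, 1) hu
  have hx_slice : ∀ (k : ℕ) (x t : ℝ),
      HasDerivAt (fun y => jet f k (y, t)) (jet f (k + 1) (x, t)) x :=
    fun k x t => hasDerivAt_slice1 (hjet k) x t
  have hDGfun : pdv (1, 0) (fun p => Gex c₀ c₁ (jet f 0 p)
        (jet f 1 p) (jet f 2 p) (jet f 3 p))
      = fun p => DGex c₀ c₁ (jet f 0 p) (jet f 1 p) (jet f 2 p)
        (jet f 3 p) (jet f 4 p) := by
    funext p
    obtain ⟨x, t⟩ := p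
    have hc := hasDerivAt_slice1 hGcsmooth x t
    have hd := hasDerivAt_Gex (x := x) (v0 := fun y => jet f 0 (y, t))
      (v1 := fun y => jet f 1 (y, t)) (v2 := fun y => jet f 2 (y, t))
      (v3 := fun y => jet f 3 (y, t)) (v4 := fun y => jet f 4 (y, t))
      c₀ c₁ (hx_slice 0 x t) (hx_slice 1 x t)
      (hx_slice 2 x t) (hx_slice 3 x t) (hne x t)
    exact hc.unique hd
  have hDGsmooth : ContDiff ℝ (⊤ : ℕ∞) (fun p => DGex c₀ c₁ (jet f 0 p)
      (jet f 1 p) (jet f 2 p) (jet f 3 p) (jet f 4 p)) :=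
    hDGfun ▸ contDiff_pdv (1, 0) hGcsmooth
  have hDD : ∀ x t, pdv (1, 0) (fun p => DGex c₀ c₁ (jet f 0 p)
        (jet f 1 p) (jet f 2 p) (jet f 3 p) (jet f 4 p)) (x, t)
      = DDGexR c₀ c₁ (jet f 0 (x, t)) (jet f 1 (x, t)) (jet f 2 (x, t))
        (jet f 3 (x, t)) (jet f 4 (x, t)) (jet f 5 (x, t)) := by
    intro x t
    have hc := hasDerivAt_slice1 hDGsmooth x t
    have hd := hasDerivAt_DGex (x := x) (v0 := fun y => jet f 0 (y, t))
      (v1 := fun y => jet f 1 (y, t)) (v2 := fun y => jet f 2 (y, t))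
      (v3 := fun y => jet f 3 (y, t)) (v4 := fun y => jet f 4 (y, t))
      (v5 := fun y => jet f 5 (y, t))
      c₀ c₁ (hx_slice 0 x t) (hx_slice 1 x t)
      (hx_slice 2 x t) (hx_slice 3 x t) (hx_slice 4 x t) (hne x t)
    exact hc.unique hd
  have hswap1 : pdv (0, 1) (pdv (1, 0) f)
      = pdv (1, 0) (fun p => Gex c₀ c₁ (jet f 0 p)
          (jet f 1 p) (jet f 2 p) (jet f 3 p)) := by
    funext q
    rw [pd_swap hu q, hGc]
  have hb0 : ∀ x t, HasDerivAt (fun s => jet f 0 (x, s))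
      (Gex c₀ c₁ (jet f 0 (x, t)) (jet f 1 (x, t)) (jet f 2 (x, t))
        (jet f 3 (x, t))) t := by
    intro x t
    have h : HasDerivAt (fun s => jet f 0 (x, s)) (pdv (0, 1) f (x, t)) t :=
      hasDerivAt_slice2 hu x t
    rw [hGc] at h
    exact h
  have hb1 : ∀ x t, HasDerivAt (fun s => jet f 1 (x, s))
      (DGex c₀ c₁ (jet f 0 (x, t)) (jet f 1 (x, t)) (jet f 2 (x, t))
        (jet f 3 (x, t)) (jet f 4 (x, t))) t := by
    intro x t
    have h : HasDerivAt (fun s => jet f 1 (x, s))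
        (pdv (0, 1) (pdv (1, 0) f) (x, t)) t :=
      hasDerivAt_slice2 (hjet 1) x t
    rw [hswap1, hDGfun] at h
    exact h
  have hb2 : ∀ x t, HasDerivAt (fun s => jet f 2 (x, s))
      (DDGexR c₀ c₁ (jet f 0 (x, t)) (jet f 1 (x, t)) (jet f 2 (x, t))
        (jet f 3 (x, t)) (jet f 4 (x, t)) (jet f 5 (x, t))) t := by
    intro x t
    have h : HasDerivAt (fun s => jet f 2 (x, s))
        (pdv (0, 1) (pdv (1, 0) (pdv (1, 0) f)) (x, t)) t :=
      hasDerivAt_slice2 (hjet 2) x t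
    rw [pd_swap (contDiff_pdv (1, 0) hu) (x, t), hswap1, hDGfun, hDD x t] at h
    exact h
  have hrhofun : rho1 c₀ c₁ u = fun a b => Rex c₀ c₁ (jet f 0 (a, b))
      (jet f 1 (a, b)) (jet f 2 (a, b)) := by
    funext a b
    simp only [rho1, Rex, Pcub, hJ1, hJ2]
    rfl
  refine ⟨fun _ a0 a1 a2 a3 a4 => Sex c₀ c₁ a0 a1 a2 a3 a4, fun x t => ?_⟩
  have hgoalfun : (fun y s => Sex c₀ c₁ (u y s) (Dx u y s) (Dx (Dx u) y s)
        (Dx (Dx (Dx u)) y s) (Dx (Dx (Dx (Dx u))) y s))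
      = fun y s => Sex c₀ c₁ (jet f 0 (y, s)) (jet f 1 (y, s))
          (jet f 2 (y, s)) (jet f 3 (y, s)) (jet f 4 (y, s)) := by
    funext y s
    rw [hJ1, hJ2, hJ3, hJ4]
    rfl
  show Dt (rho1 c₀ c₁ u) x t = Dx (fun y s => Sex c₀ c₁ (u y s) (Dx u y s)
    (Dx (Dx u) y s) (Dx (Dx (Dx u)) y s) (Dx (Dx (Dx (Dx u))) y s)) x t
  rw [hrhofun, hgoalfun]
  simp only [Dt, Dx]
  have e1 : deriv (fun s => Rex c₀ c₁ (jet f 0 (x, s)) (jet f 1 (x, s))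
        (jet f 2 (x, s))) t
      = DRex c₀ c₁ (jet f 0 (x, t)) (jet f 1 (x, t)) (jet f 2 (x, t))
          (Gex c₀ c₁ (jet f 0 (x, t)) (jet f 1 (x, t)) (jet f 2 (x, t))
            (jet f 3 (x, t)))
          (DGex c₀ c₁ (jet f 0 (x, t)) (jet f 1 (x, t)) (jet f 2 (x, t))
            (jet f 3 (x, t)) (jet f 4 (x, t)))
          (DDGexR c₀ c₁ (jet f 0 (x, t)) (jet f 1 (x, t)) (jet f 2 (x, t))
            (jet f 3 (x, t)) (jet f 4 (x, t)) (jet f 5 (x, t))) :=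
    (hasDerivAt_Rex (x := t) (v0 := fun s => jet f 0 (x, s))
      (v1 := fun s => jet f 1 (x, s)) (v2 := fun s => jet f 2 (x, s))
      c₀ c₁ (hb0 x t) (hb1 x t) (hb2 x t) (hne x t)).deriv
  have e2 : deriv (fun y => Sex c₀ c₁ (jet f 0 (y, t)) (jet f 1 (y, t))
        (jet f 2 (y, t)) (jet f 3 (y, t)) (jet f 4 (y, t))) x
      = DSex c₀ c₁ (jet f 0 (x, t)) (jet f 1 (x, t)) (jet f 2 (x, t))
          (jet f 3 (x, t)) (jet f 4 (x, t)) (jet f 5 (x, t)) :=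
    (hasDerivAt_Sex (x := x) (v0 := fun y => jet f 0 (y, t))
      (v1 := fun y => jet f 1 (y, t)) (v2 := fun y => jet f 2 (y, t))
      (v3 := fun y => jet f 3 (y, t)) (v4 := fun y => jet f 4 (y, t))
      (v5 := fun y => jet f 5 (y, t))
      c₀ c₁ (hx_slice 0 x t) (hx_slice 1 x t) (hx_slice 2 x t)
      (hx_slice 3 x t) (hx_slice 4 x t) (hne x t)).deriv
  rw [e1, e2]
  exact key_ident c₀ c₁ _ _ _ _ _ _ (hne x t)
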